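/- Let n ≥ 3. A permutation π ∈ S_n satisfies: π avoids both the pattern 231 and the pattern 1432, π² avoids the pattern 231, and π(1) = n, if and only if there exists an integer k with ⌈n/2⌉ ≤ k ≤ n−1 such that π is the permutation n(n−1)⋯(n−k+1)12⋯(n−k), i.e., π(i) = n + 1 − i for 1 ≤ i ≤ k and π(i) = i − k for k + 1 ≤ i ≤ n. -/
import Mathlib


/-- `π` contains the (classical) pattern `σ`: there is a strictly increasing
sequence of positions on which `π` is order isomorphic to `σ`. -/
def ContainsPat {n k : ℕ} (π : Equiv.Perm (Fin n)) (σ : Equiv.Perm (Fin k)) : Prop :=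
  ∃ f : Fin k → Fin n, StrictMono f ∧ ∀ a b : Fin k, σ a < σ b ↔ π (f a) < π (f b)

/-- `π` avoids the pattern `σ`. -/
def AvoidsPat {n k : ℕ} (π : Equiv.Perm (Fin n)) (σ : Equiv.Perm (Fin k)) : Prop :=
  ¬ ContainsPat π σ

/-- `π` contains the consecutive pattern `σ`: some `k` consecutive positions of `π`
carry values order isomorphic to `σ`. -/
def ContainsConsecPat {n k : ℕ} (π : Equiv.Perm (Fin n)) (σ : Equiv.Perm (Fin k)) : Prop :=
  ∃ (i : ℕ) (h : i + k ≤ n), ∀ a b : Fin k,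
    σ a < σ b ↔ π ⟨i + a.val, by have := a.isLt; omega⟩ < π ⟨i + b.val, by have := b.isLt; omega⟩

/-- `π` avoids the consecutive pattern `σ`. -/
def AvoidsConsecPat {n k : ℕ} (π : Equiv.Perm (Fin n)) (σ : Equiv.Perm (Fin k)) : Prop :=
  ¬ ContainsConsecPat π σ

/-- the pattern 231 (0-indexed: 0 ↦ 1, 1 ↦ 2, 2 ↦ 0) -/
def p231 : Equiv.Perm (Fin 3) := c[0, 1, 2]

/-- the pattern 312 (0-indexed: 0 ↦ 2, 1 ↦ 0, 2 ↦ 1) -/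
def p312 : Equiv.Perm (Fin 3) := c[0, 2, 1]

/-- the pattern 213 (0-indexed: 0 ↦ 1, 1 ↦ 0, 2 ↦ 2) -/
def p213 : Equiv.Perm (Fin 3) := c[0, 1]

/-- the pattern 1432 (0-indexed: 0 ↦ 0, 1 ↦ 3, 2 ↦ 2, 3 ↦ 1) -/
def p1432 : Equiv.Perm (Fin 4) := c[1, 3]

/-- direct sum of two permutations -/
def dsum {k m : ℕ} (σ : Equiv.Perm (Fin k)) (τ : Equiv.Perm (Fin m)) :
    Equiv.Perm (Fin (k + m)) :=
  finSumFinEquiv.symm.trans ((Equiv.sumCongr σ τ).trans finSumFinEquiv)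

/-- the Lucas numbers: L₁ = 1, L₂ = 3, L_m = L_{m-1} + L_{m-2} -/
def lucas : ℕ → ℕ
  | 0 => 2
  | 1 => 1
  | n + 2 => lucas (n + 1) + lucas n

lemma c231 {n : ℕ} (ρ : Equiv.Perm (Fin n)) :
    ContainsPat ρ p231 ↔ ∃ x y z : Fin n, x < y ∧ y < z ∧ ρ z < ρ x ∧ ρ x < ρ y := by
  constructor
  · rintro ⟨f, hf, hiff⟩
    exact ⟨f 0, f 1, f 2, hf (by decide), hf (by decide),
      (hiff 2 0).1 (by decide), (hiff 0 1).1 (by decide)⟩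
  · rintro ⟨x, y, z, h1, h2, h3, h4⟩
    have h5 : ρ z < ρ y := lt_trans h3 h4
    refine ⟨![x, y, z], ?_, ?_⟩
    · intro a b hab
      fin_cases a <;> fin_cases b
      · exact absurd hab (by decide)
      · exact h1
      · exact h1.trans h2
      · exact absurd hab (by decide)
      · exact absurd hab (by decide)
      · exact h2
      · exact absurd hab (by decide)
      · exact absurd hab (by decide)
      · exact absurd hab (by decide)
    · intro a b
      fin_cases a <;> fin_cases b
      · exact iff_of_false (by decide) (lt_irrefl _)
      · exact iff_of_true (by decide) h4
      · exact iff_of_false (by decide) (lt_asymm h3)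
      · exact iff_of_false (by decide) (lt_asymm h4)
      · exact iff_of_false (by decide) (lt_irrefl _)
      · exact iff_of_false (by decide) (lt_asymm h5)
      · exact iff_of_true (by decide) h3
      · exact iff_of_true (by decide) h5
      · exact iff_of_false (by decide) (lt_irrefl _)

lemma c1432 {n : ℕ} (ρ : Equiv.Perm (Fin n)) (h : ContainsPat ρ p1432) :
    ∃ w x y z : Fin n, w < x ∧ x < y ∧ y < z ∧ ρ w < ρ z ∧ ρ z < ρ y ∧ ρ y < ρ x := by
  obtain ⟨f, hf, hiff⟩ := h
  exact ⟨f 0, f 1, f 2, f 3, hf (by decide), hf (by decide), hf (by decide),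
    (hiff 0 3).1 (by decide), (hiff 3 2).1 (by decide), (hiff 2 1).1 (by decide)⟩

lemma asc231 {n : ℕ} (ρ : Equiv.Perm (Fin n)) (h : AvoidsPat ρ p231)
    {x y z : Fin n} (hxy : x < y) (hyz : y < z) (hv : ρ x < ρ y) : ρ x < ρ z := by
  by_contra hc
  push_neg at hc
  have hne : ρ z ≠ ρ x := fun e => (Fin.ne_of_lt (hxy.trans hyz)).symm (ρ.injective e)
  exact h ((c231 ρ).2 ⟨x, y, z, hxy, hyz, lt_of_le_of_ne hc hne, hv⟩)

/-- for n ≥ 3, π ∈ S_n avoids 231 and 1432, π² avoids 231 and π(1) = n,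
iff π = n(n−1)⋯(n−k+1)12⋯(n−k) for some ⌈n/2⌉ ≤ k ≤ n−1 (stated 0-indexed:
position i carries value n−1−i for i < k and value i−k for i ≥ k). -/
theorem stmt4 (n : ℕ) (hn : 3 ≤ n) (π : Equiv.Perm (Fin n)) :
    (AvoidsPat π p231 ∧ AvoidsPat π p1432 ∧ AvoidsPat (π ^ 2) p231 ∧
        π ⟨0, by omega⟩ = ⟨n - 1, by omega⟩) ↔
      ∃ k : ℕ, (n + 1) / 2 ≤ k ∧ k ≤ n - 1 ∧
        ∀ i : Fin n, ((i : ℕ) < k → (π i : ℕ) = n - 1 - i) ∧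
          (k ≤ (i : ℕ) → (π i : ℕ) = i - k) := by
  have e2 : ∀ t : Fin n, (π ^ 2) t = π (π t) := fun t => by rw [pow_two]; rfl
  constructor
  · -- FORWARD
    rintro ⟨hA231, _hA1432, hAsq, hfirst⟩
    set ρ : Equiv.Perm (Fin n) := π ^ 2 with hρdef
    have h0n : 0 < n := by omega
    have hn1 : n - 1 < n := by omega
    set K : Fin n := π.symm ⟨0, h0n⟩ with hKdef
    have hπK : π K = ⟨0, h0n⟩ := π.apply_symm_apply _
    have hfv : (π ⟨0, h0n⟩).val = n - 1 := congrArg Fin.val hfirst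
    have hKpos : 0 < K.val := by
      rcases Nat.eq_zero_or_pos K.val with h | h
      · exfalso
        have hKz : K = ⟨0, h0n⟩ := Fin.ext h
        have h2 : (π ⟨0, h0n⟩).val = 0 := by
          rw [← hKz, hπK]
        omega
      · exact h
    have no231 : ∀ x y z : Fin n, x < y → y < z → π z < π x → π x < π y → False :=
      fun x y z h1 h2 h3 h4 => hA231 ((c231 π).2 ⟨x, y, z, h1, h2, h3, h4⟩)
    have no231sq : ∀ x y z : Fin n, x < y → y < z → ρ z < ρ x → ρ x < ρ y → False :=
      fun x y z h1 h2 h3 h4 => hAsq ((c231 ρ).2 ⟨x, y, z, h1, h2, h3, h4⟩)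
    have hpos : ∀ x : Fin n, x ≠ K → (⟨0, h0n⟩ : Fin n) < π x := by
      intro x hx
      have hne : π x ≠ ⟨0, h0n⟩ := fun e => hx (by rw [← hπK] at e; exact π.injective e)
      exact Fin.lt_def.2 (Nat.pos_of_ne_zero (fun e => hne (Fin.ext e)))
    have Pdec : ∀ i j : Fin n, i < j → j ≤ K → π j < π i := by
      intro i j hij hjK
      rcases lt_or_eq_of_le hjK with hjK' | rfl
      · by_contra h
        push_neg at h
        have hne : π i ≠ π j := fun e => Fin.ne_of_lt hij (π.injective e)
        have hij' : π i < π j := lt_of_le_of_ne h hne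
        have hπi : π K < π i := by
          rw [hπK]; exact hpos i (Fin.ne_of_lt (hij.trans hjK'))
        exact no231 i j K hij hjK' hπi hij'
      · rw [hπK]; exact hpos i (Fin.ne_of_lt hij)
    have hsqK : ρ K = ⟨n - 1, hn1⟩ := by rw [e2, hπK]; exact Fin.ext hfv
    have hlt_last : ∀ x : Fin n, x ≠ K → ρ x < ⟨n - 1, hn1⟩ := by
      intro x hx
      have hne : ρ x ≠ ⟨n - 1, hn1⟩ :=
        fun e => hx (ρ.injective (e.trans hsqK.symm))
      have hle : (ρ x).val ≤ n - 1 := by have := (ρ x).isLt; omega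
      exact Fin.lt_def.2 (lt_of_le_of_ne hle fun e => hne (Fin.ext e))
    have SplitL : ∀ a l : Fin n, a < K → K < l → ρ a < ρ l := by
      intro a l haK hKl
      have h1 : ρ a < ρ K := by
        rw [hsqK]; exact hlt_last a (Fin.ne_of_lt haK)
      exact asc231 ρ hAsq haK hKl h1
    have smallSq : ∀ p : Fin n, p < K → ρ p < K := by
      intro p hpK
      have himg : ((Finset.Ici K).image ρ) ⊆ Finset.Ioi (ρ p) := by
        intro v hv
        obtain ⟨l, hl, rfl⟩ := Finset.mem_image.1 hv
        rcases (Finset.mem_Ici.1 hl).lt_or_eq with h | rfl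
        · exact Finset.mem_Ioi.2 (SplitL p l hpK h)
        · rw [hsqK]
          exact Finset.mem_Ioi.2 (hlt_last p (Fin.ne_of_lt hpK))
      have hcard := Finset.card_le_card himg
      rw [Finset.card_image_of_injective _ (Equiv.injective ρ), Fin.card_Ici,
        Fin.card_Ioi] at hcard
      have h1 := (ρ p).isLt
      have h2 := K.isLt
      exact Fin.lt_def.2 (by omega)
    set P : Finset (Fin n) := (Finset.Iio K).image π with hPdef
    set A : Finset (Fin n) := Finset.filter (fun x => π x < K) Finset.univ with hAdef
    have hPsubA : P ⊆ A := by
      intro v hv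
      obtain ⟨p, hp, rfl⟩ := Finset.mem_image.1 hv
      refine Finset.mem_filter.2 ⟨Finset.mem_univ _, ?_⟩
      rw [← e2]
      exact smallSq p (Finset.mem_Iio.1 hp)
    have hcardP : P.card = K.val := by
      rw [hPdef, Finset.card_image_of_injective _ π.injective, Fin.card_Iio]
    have hcardA : A.card = K.val := by
      have hA' : A = (Finset.Iio K).image π.symm := by
        ext x
        simp only [hAdef, Finset.mem_filter, Finset.mem_univ, true_and,
          Finset.mem_image, Finset.mem_Iio]
        constructor
        · intro h; exact ⟨π x, h, π.symm_apply_apply x⟩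
        · rintro ⟨v, hv, rfl⟩; rwa [π.apply_symm_apply]
      rw [hA', Finset.card_image_of_injective _ π.symm.injective, Fin.card_Iio]
    have hPA : P = A :=
      Finset.eq_of_subset_of_card_le hPsubA (le_of_eq (hcardA.trans hcardP.symm))
    have hlast : π ⟨n - 1, hn1⟩ < K := by
      have h := smallSq ⟨0, h0n⟩ (Fin.lt_def.2 hKpos)
      rw [e2] at h
      have hf1 : π ⟨0, h0n⟩ = ⟨n - 1, hn1⟩ := Fin.ext hfv
      rwa [hf1] at h
    have hKA : K ∈ A := Finset.mem_filter.2 ⟨Finset.mem_univ _, by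
      rw [hπK]; exact Fin.lt_def.2 hKpos⟩
    have hKP : K ∈ P := hPA ▸ hKA
    obtain ⟨p0, hp0mem, hπp0⟩ := Finset.mem_image.1 hKP
    have hp0K : p0 < K := Finset.mem_Iio.1 hp0mem
    have hsuffsmall : ∀ l : Fin n, K < l → π l < K := by
      intro l hKl
      rcases eq_or_lt_of_le (show l.val ≤ n - 1 by have := l.isLt; omega) with h | h
      · have : l = ⟨n - 1, hn1⟩ := Fin.ext h
        rwa [this]
      · by_contra hcon
        push_neg at hcon
        have hne : π l ≠ K := by
          intro e
          have : l = p0 := π.injective (e.trans hπp0.symm)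
          rw [this] at hKl
          exact lt_asymm hKl hp0K
        have hKπl : K < π l := lt_of_le_of_ne hcon (Ne.symm hne)
        refine no231 p0 l ⟨n - 1, hn1⟩ (hp0K.trans hKl) (Fin.lt_def.2 h) ?_ ?_
        · rw [hπp0]; exact hlast
        · rw [hπp0]; exact hKπl
    have hA_Ioi : A = Finset.Ioi p0 := by
      ext x
      simp only [hAdef, Finset.mem_filter, Finset.mem_univ, true_and, Finset.mem_Ioi]
      constructor
      · intro hx
        by_contra hcon
        push_neg at hcon
        rcases lt_or_eq_of_le hcon with h' | rfl
        · have := Pdec x p0 h' (le_of_lt hp0K)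
          rw [hπp0] at this
          exact lt_asymm this hx
        · rw [hπp0] at hx; exact lt_irrefl _ hx
      · intro hx
        rcases lt_trichotomy x K with h | rfl | h
        · have := Pdec p0 x hx (le_of_lt h)
          rwa [hπp0] at this
        · rw [hπK]; exact Fin.lt_def.2 hKpos
        · exact hsuffsmall x h
    have hp0val : p0.val = n - 1 - K.val := by
      have h1 : A.card = n - 1 - p0.val := by rw [hA_Ioi, Fin.card_Ioi]
      have h2 := p0.isLt
      have h3 := K.isLt
      omega
    have hp0K' : p0.val < K.val := hp0K
    have hbound : (n + 1) / 2 ≤ K.val := by omega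
    have hkn : K.val ≤ n - 1 := by have := K.isLt; omega
    have hP_Ioi : P = Finset.Ioi p0 := hPA.trans hA_Ioi
    have hprefix : ∀ i : Fin n, i.val < K.val → (π i).val = n - 1 - i.val := by
      intro i hik
      have hiP : π i ∈ P := Finset.mem_image_of_mem π (Finset.mem_Iio.2 (Fin.lt_def.2 hik))
      have hp0πi : p0 < π i := Finset.mem_Ioi.1 (hP_Ioi ▸ hiP)
      have hIoi : Finset.Ioi (π i) = (Finset.Iio i).image π := by
        ext v
        simp only [Finset.mem_Ioi, Finset.mem_image, Finset.mem_Iio]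
        constructor
        · intro hv
          have hvP : v ∈ P := by
            rw [hP_Ioi]; exact Finset.mem_Ioi.2 (hp0πi.trans hv)
          obtain ⟨j, hj, rfl⟩ := Finset.mem_image.1 hvP
          have hjK := Finset.mem_Iio.1 hj
          refine ⟨j, ?_, rfl⟩
          by_contra hcon
          push_neg at hcon
          rcases lt_or_eq_of_le hcon with h' | rfl
          · exact lt_asymm hv (Pdec i j h' (le_of_lt hjK))
          · exact lt_irrefl _ hv
        · rintro ⟨j, hj, rfl⟩
          exact Pdec j i hj (le_of_lt (Fin.lt_def.2 hik))
      have hc := congrArg Finset.card hIoi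
      rw [Fin.card_Ioi, Finset.card_image_of_injective _ π.injective, Fin.card_Iio] at hc
      have h1 := (π i).isLt
      have h2 := i.isLt
      omega
    have hsuffmono : ∀ l1 l2 : Fin n, K < l1 → l1 < l2 → π l1 < π l2 := by
      intro l1 l2 h1 h2
      by_contra hcon
      push_neg at hcon
      have hne : π l2 ≠ π l1 := fun e => Fin.ne_of_lt h2 (π.injective e).symm
      have hlt : π l2 < π l1 := lt_of_le_of_ne hcon hne
      have hl2n : l2.val < n := l2.isLt
      have hKl1 : K.val < l1.val := h1
      have hl12 : l1.val < l2.val := h2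
      have ha : n - 1 - l2.val < n := by omega
      have hb : n - 1 - l1.val < n := by omega
      have haK : n - 1 - l2.val < K.val := by omega
      have hbK : n - 1 - l1.val < K.val := by omega
      have haval : (π (⟨n - 1 - l2.val, ha⟩ : Fin n)).val = n - 1 - (n - 1 - l2.val) :=
        hprefix ⟨n - 1 - l2.val, ha⟩ haK
      have hbval : (π (⟨n - 1 - l1.val, hb⟩ : Fin n)).val = n - 1 - (n - 1 - l1.val) :=
        hprefix ⟨n - 1 - l1.val, hb⟩ hbK
      have hπa : π ⟨n - 1 - l2.val, ha⟩ = l2 := Fin.ext (by rw [haval]; omega)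
      have hπb : π ⟨n - 1 - l1.val, hb⟩ = l1 := Fin.ext (by rw [hbval]; omega)
      have hsq_p0 : ρ p0 = ⟨0, h0n⟩ := by rw [e2, hπp0, hπK]
      refine no231sq ⟨n - 1 - l2.val, ha⟩ ⟨n - 1 - l1.val, hb⟩ p0
        (Fin.lt_def.2 (show n - 1 - l2.val < n - 1 - l1.val by omega))
        (Fin.lt_def.2 (show n - 1 - l1.val < p0.val by omega)) ?_ ?_
      · rw [hsq_p0, e2, hπa]
        exact hpos l2 (Fin.ne_of_lt (h1.trans h2)).symm
      · rw [e2, e2, hπa, hπb]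
        exact hlt
    have hsuffix : ∀ l : Fin n, K.val ≤ l.val → (π l).val = l.val - K.val := by
      intro l hKl
      rcases eq_or_lt_of_le hKl with h | h
      · have hlK : l = K := Fin.ext h.symm
        rw [hlK, hπK]
        exact (Nat.sub_self K.val).symm
      · have hKl' : K < l := Fin.lt_def.2 h
        have hπlP : π l ∉ P := by
          intro hmem
          obtain ⟨j, hj, he⟩ := Finset.mem_image.1 hmem
          have hjl : j = l := π.injective he
          rw [hjl] at hj
          exact lt_asymm hKl' (Finset.mem_Iio.1 hj)
        have hπl_le : (π l).val ≤ p0.val := by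
          have hnp : ¬ p0 < π l := fun hc => hπlP (by rw [hP_Ioi]; exact Finset.mem_Ioi.2 hc)
          have : ¬ p0.val < (π l).val := fun hc => hnp (Fin.lt_def.2 hc)
          omega
        have hIio : Finset.Iio (π l) = (Finset.Ico K l).image π := by
          ext v
          simp only [Finset.mem_Iio, Finset.mem_image, Finset.mem_Ico]
          constructor
          · intro hv
            have hvval : v.val < (π l).val := hv
            have hvP : v ∉ P := by
              rw [hP_Ioi]
              simp only [Finset.mem_Ioi]
              intro hc
              have : p0.val < v.val := hc
              omega
            have hjv : π (π.symm v) = v := π.apply_symm_apply v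
            have hjK : ¬ π.symm v < K := fun hc =>
              hvP (by rw [← hjv]; exact Finset.mem_image_of_mem π (Finset.mem_Iio.2 hc))
            refine ⟨π.symm v, ⟨not_lt.1 hjK, ?_⟩, hjv⟩
            by_contra hcon
            push_neg at hcon
            rcases lt_or_eq_of_le hcon with h'' | he2
            · have := hsuffmono l (π.symm v) hKl' h''
              rw [hjv] at this
              exact lt_asymm hv this
            · rw [← he2] at hjv
              rw [hjv] at hv
              exact lt_irrefl _ hv
          · rintro ⟨j, ⟨hj1, hj2⟩, rfl⟩
            rcases eq_or_lt_of_le hj1 with he | h'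
            · rw [← he, hπK]
              exact hpos l (Fin.ne_of_lt hKl').symm
            · exact hsuffmono j l h' hj2
        have hc := congrArg Finset.card hIio
        rw [Fin.card_Iio, Finset.card_image_of_injective _ π.injective, Fin.card_Ico] at hc
        omega
    exact ⟨K.val, hbound, hkn, fun i => ⟨hprefix i, hsuffix i⟩⟩
  · -- BACKWARD
    rintro ⟨k, hk1, hk2, hform⟩
    have hval : ∀ i : Fin n, ((i : ℕ) < k ∧ (π i : ℕ) = n - 1 - i) ∨
        (k ≤ (i : ℕ) ∧ (π i : ℕ) = (i : ℕ) - k) := by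
      intro i
      rcases Nat.lt_or_ge (i : ℕ) k with h | h
      · exact Or.inl ⟨h, (hform i).1 h⟩
      · exact Or.inr ⟨h, (hform i).2 h⟩
    refine ⟨?_, ?_, ?_, ?_⟩
    · intro hc
      obtain ⟨x, y, z, h1, h2, h3, h4⟩ := (c231 π).1 hc
      have h1' : (x : ℕ) < y := h1
      have h2' : (y : ℕ) < z := h2
      have h3' : (π z : ℕ) < π x := h3
      have h4' : (π x : ℕ) < π y := h4
      have hx := hval x; have hy := hval y; have hz := hval z
      have := x.isLt; have := y.isLt; have := z.isLt
      omega
    · intro hc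
      obtain ⟨w, x, y, z, h1, h2, h3, h4, h5, h6⟩ := c1432 π hc
      have h1' : (w : ℕ) < x := h1
      have h2' : (x : ℕ) < y := h2
      have h3' : (y : ℕ) < z := h3
      have h4' : (π w : ℕ) < π z := h4
      have h5' : (π z : ℕ) < π y := h5
      have h6' : (π y : ℕ) < π x := h6
      have hw := hval w; have hx := hval x; have hy := hval y; have hz := hval z
      have := w.isLt; have := x.isLt; have := y.isLt; have := z.isLt
      omega
    · intro hc
      obtain ⟨x, y, z, h1, h2, h3, h4⟩ := (c231 (π ^ 2)).1 hc
      rw [e2, e2] at h3 h4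
      have h1' : (x : ℕ) < y := h1
      have h2' : (y : ℕ) < z := h2
      have h3' : (π (π z) : ℕ) < π (π x) := h3
      have h4' : (π (π x) : ℕ) < π (π y) := h4
      have hx := hval x; have hy := hval y; have hz := hval z
      have hx2 := hval (π x); have hy2 := hval (π y); have hz2 := hval (π z)
      have := x.isLt; have := y.isLt; have := z.isLt
      have := (π x).isLt; have := (π y).isLt; have := (π z).isLt
      omega
    · have h0 : (0 : ℕ) < k := by omega
      have h1 : (π ⟨0, by omega⟩ : ℕ) = n - 1 - 0 := (hform ⟨0, by omega⟩).1 h0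
      exact Fin.ext (show (π ⟨0, by omega⟩ : Fin n).val = n - 1 by omega)
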